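/- Let H be a k-absorber with absorbing part Q(H), and let X, Y ⊆ Q(H) be two vertex sets of size 2k that each induce transitive subtournaments. Then H contains the k-th power of a Hamilton path (a k-th power of a directed path using every vertex of H) whose first k vertices lie in Y and whose last k vertices lie in X. -/

import Mathlib

open Finset

attribute [local instance] Classical.propDecidable

/-- `E` is a tournament relation: irreflexive, and for distinct vertices exactly one
direction is present. -/
def IsTournament {V : Type} (E : V → V → Prop) : Prop :=
  (∀ v, ¬ E v v) ∧ ∀ u v : V, u ≠ v → (E u v ↔ ¬ E v u)

/-- `x : Fin m → V` is the `k`-th power of a directed path: distinct vertices with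
`x i → x j` whenever `i < j ≤ i + k`. -/
def IsPathPower {V : Type} (E : V → V → Prop) (k m : ℕ) (x : Fin m → V) : Prop :=
  Function.Injective x ∧
    ∀ i j : Fin m, (i : ℕ) < (j : ℕ) → (j : ℕ) ≤ (i : ℕ) + k → E (x i) (x j)

/-- `x : Fin m → V` is the `k`-th power of a directed cycle of length `m`: distinct
vertices with an edge from `x i` to each of its `k` cyclic successors. -/
def IsCyclePower {V : Type} (E : V → V → Prop) (k m : ℕ) (x : Fin m → V) : Prop :=
  Function.Injective x ∧
    ∀ (i : Fin m) (d : ℕ), 1 ≤ d → d ≤ k →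
      E (x i) (x ⟨((i : ℕ) + d) % m, Nat.mod_lt _ i.pos⟩)

/-- The set `S` induces a transitive subtournament: its elements can be linearly
ordered so that every edge inside `S` goes from smaller to larger. -/
def IsTransitiveOn {V : Type} (E : V → V → Prop) (S : Finset V) : Prop :=
  ∃ f : V → ℕ, Set.InjOn f ↑S ∧ ∀ u ∈ S, ∀ v ∈ S, E u v → f u < f v

/-- `X ⇒ Y`: an edge from every vertex of `X` to every vertex of `Y`. -/
def Dominates {V : Type} (E : V → V → Prop) (X Y : Finset V) : Prop :=
  ∀ x ∈ X, ∀ y ∈ Y, E x y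

/-- Number of forward edges of `E` with respect to the ordering `σ`. -/
noncomputable def fwdCount {V : Type} [Fintype V] (E : V → V → Prop)
    (σ : V ≃ Fin (Fintype.card V)) : ℕ :=
  (Finset.univ.filter fun p : V × V => E p.1 p.2 ∧ σ p.1 < σ p.2).card

/-- Number of backward edges of `E` with respect to the ordering `σ`. -/
noncomputable def backCount {V : Type} [Fintype V] (E : V → V → Prop)
    (σ : V ≃ Fin (Fintype.card V)) : ℕ :=
  (Finset.univ.filter fun p : V × V => E p.1 p.2 ∧ σ p.2 < σ p.1).card

/-- A median ordering: a vertex ordering maximizing the number of forward edges. -/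
def IsMedianOrder {V : Type} [Fintype V] (E : V → V → Prop)
    (τ : V ≃ Fin (Fintype.card V)) : Prop :=
  ∀ σ : V ≃ Fin (Fintype.card V), fwdCount E σ ≤ fwdCount E τ

/-- An `n`-vertex tournament is `ε`-intransitive if every vertex ordering has at
least `ε n²` backward edges. -/
def IsIntransitive {V : Type} [Fintype V] (E : V → V → Prop) (ε : ℝ) : Prop :=
  ∀ σ : V ≃ Fin (Fintype.card V),
    ε * (Fintype.card V : ℝ) ^ 2 ≤ (backCount E σ : ℝ)

/-- The sets `A lo ≺ A (lo+1) ≺ ⋯ ≺ A hi` form a splitting of an interval of the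
ordering `τ` into consecutive subintervals of size `m` each. -/
def IsIntervalSplit {V : Type} [Fintype V] (τ : V ≃ Fin (Fintype.card V))
    (m lo hi : ℕ) (A : ℕ → Finset V) : Prop :=
  ∃ a : ℕ, ∀ i, lo ≤ i → i ≤ hi → ∀ v : V,
    v ∈ A i ↔ (a + i * m ≤ (τ v : ℕ) ∧ (τ v : ℕ) < a + (i + 1) * m)

/-- `H` is a `k`-absorber with absorbing part `Q`. -/
def IsAbsorber {V : Type} (E : V → V → Prop) (k : ℕ) (H Q : Finset V) : Prop :=
  ∃ (r : ℕ) (S : ℕ → Finset V) (q : ℕ → V),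
    2 ^ (10 * k) < r ∧
    (∀ i j, i ≤ r → j ≤ r → i ≠ j → Disjoint (S i) (S j)) ∧
    (∀ i ≤ r, Disjoint (S i) Q) ∧
    H = (Finset.range (r + 1)).biUnion S ∪ Q ∧
    Q = (Finset.Icc 1 (2 ^ (10 * k))).image q ∧
    Set.InjOn q (Set.Icc 1 (2 ^ (10 * k))) ∧
    (∀ i ≤ r, (S i).card = 2 * k ∧ IsTransitiveOn E (S i)) ∧
    (∀ i < r, Dominates E (S i) (S (i + 1))) ∧
    Dominates E (S r) (S 0) ∧
    Dominates E (S 0) Q ∧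
    Dominates E Q (S (2 ^ (10 * k) + 1)) ∧
    (∀ i, 1 ≤ i → i ≤ 2 ^ (10 * k) →
      Dominates E (S i) {q i} ∧ Dominates E {q i} (S (i + 1)))

/-!
Let `S₀ ⇒ S₁ ⇒ ⋯ ⇒ S_r ⇒ S₀` be the transitive `2k`-blocks of the absorber, each listed in its
transitive order, and `R = 2^{10k}`. Pick `P ⊆ Y` and `T ⊆ X \ P` with `k` vertices each. The path
is `P`, the first halves of `S_{R+1}, …, S_r, S₀`, then `S₁ q₁ S₂ q₂ ⋯ S_R q_R` (skipping the `q_j`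
that lie in `P ∪ T`), the second halves of `S_{R+1}, …, S_r, S₀`, and finally `T`. This is a
concatenation of transitive blocks of length at least `k` in which every vertex of a block beats
the first `k` vertices of the next block, and any such concatenation is the `k`-th power of a path.
-/

theorem Multiset.coe_flatten {α : Type*} (L : List (List α)) :
    ((L.flatten : List α) : Multiset α) = (L.map (↑)).sum := by
  rw [← Multiset.coe_join, Multiset.join, Multiset.sum_coe]

theorem List.flatten_map_ite_singleton {α β : Type*} (f : α → β) (U : List β) (l : List α) :
    (l.map fun j => if f j ∈ U then [] else [f j]).flatten = (l.map f).filter (· ∉ U) := by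
  induction l with
  | nil => rfl
  | cons j l ih => by_cases h : f j ∈ U <;> simp [h, ih]

theorem Finset.val_biUnion_range_union {α : Type*} {S : ℕ → Finset α} {Q : Finset α} {n : ℕ}
    (hS : ∀ i < n, ∀ j < n, i ≠ j → Disjoint (S i) (S j)) (hSQ : ∀ i < n, Disjoint (S i) Q) :
    ((range n).biUnion S ∪ Q).val = ((List.range n).map fun i => (S i).val).sum + Q.val := by
  have hpd : (↑(range n) : Set ℕ).PairwiseDisjoint S :=
    fun i hi j hj => hS i (mem_range.1 hi) j (mem_range.1 hj)
  have hdQ : Disjoint ((range n).biUnion S) Q :=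
    (disjoint_biUnion_left _ _ _).2 fun i hi => hSQ i (mem_range.1 hi)
  rw [← disjUnion_eq_union _ _ hdQ, disjUnion_val, ← disjiUnion_eq_biUnion _ _ hpd,
    disjiUnion_val, range_val, Multiset.range, Multiset.bind, Multiset.map_coe, Multiset.join,
    Multiset.sum_coe]

section

variable {V : Type} {E : V → V → Prop} {k : ℕ}

def IsPathPowerList (E : V → V → Prop) (k : ℕ) : List V → Prop
  | [] => True
  | a :: l => (∀ b ∈ l.take k, E a b) ∧ IsPathPowerList E k l

def BeatsPrefix (E : V → V → Prop) (k : ℕ) (b c : List V) : Prop :=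
  ∀ a ∈ b, ∀ x ∈ c.take k, E a x

theorem IsPathPowerList.prepend {b l : List V} (hl : IsPathPowerList E k l) (hb : b.Pairwise E)
    (hbl : BeatsPrefix E k b l) : IsPathPowerList E k (b ++ l) := by
  induction b with
  | nil => exact hl
  | cons a b ih =>
    rw [List.pairwise_cons] at hb
    rw [List.cons_append]
    refine ⟨fun x hx => ?_, ih hb.2 fun a' ha' => hbl a' (List.mem_cons_of_mem a ha')⟩
    rw [List.take_append] at hx
    rcases List.mem_append.1 hx with hx | hx
    · exact hb.1 x (List.mem_of_mem_take hx)
    · exact hbl a List.mem_cons_self x ((List.take_prefix_take_left (by omega)).subset hx)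

theorem isPathPowerList_flatten {Bs : List (List V)} (hpw : ∀ b ∈ Bs, b.Pairwise E)
    (hlen : ∀ b ∈ Bs, k ≤ b.length) (hchain : Bs.IsChain (BeatsPrefix E k)) :
    IsPathPowerList E k Bs.flatten := by
  induction Bs with
  | nil => trivial
  | cons b Bs ih =>
    refine (ih (fun c hc => hpw c (List.mem_cons_of_mem b hc))
      (fun c hc => hlen c (List.mem_cons_of_mem b hc)) hchain.tail).prepend
      (hpw b List.mem_cons_self) ?_
    cases Bs with
    | nil => simp [BeatsPrefix]
    | cons c Bs =>
      rw [List.flatten_cons, BeatsPrefix, List.take_append_of_le_length (hlen c (by simp))]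
      exact (List.isChain_cons_cons.1 hchain).1

theorem IsPathPowerList.rel_getElem {L : List V} (h : IsPathPowerList E k L) {i j : ℕ}
    (hij : i < j) (hjk : j ≤ i + k) (hj : j < L.length) : E L[i] L[j] := by
  induction L generalizing i j with
  | nil => simp at hj
  | cons a l ih =>
    obtain ⟨j, rfl⟩ : ∃ j', j = j' + 1 := ⟨j - 1, by omega⟩
    cases i with
    | zero => exact h.1 _ (List.mem_iff_getElem.2 ⟨j, by simp at hj ⊢; omega, by simp⟩)
    | succ i => exact ih h.2 (by omega) (by omega) _

theorem IsPathPowerList.isPathPower {L : List V} (h : IsPathPowerList E k L) (hL : L.Nodup)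
    {n : ℕ} (hn : L.length = n) : IsPathPower E k n fun i => L[i.1] := by
  subst hn
  exact ⟨fun i j hij => Fin.ext (hL.getElem_inj_iff.1 hij),
    fun i j hij hjk => h.rel_getElem hij hjk j.2⟩

theorem IsPathPowerList.exists_isPathPower {H : Finset V} {P M T : List V}
    (h : IsPathPowerList E k (P ++ M ++ T)) (hH : ((P ++ M ++ T : List V) : Multiset V) = H.val) :
    ∃ x : Fin H.card → V, IsPathPower E k H.card x ∧ univ.image x = H ∧
      (∀ i : Fin H.card, (i : ℕ) < P.length → x i ∈ P) ∧
      (∀ i : Fin H.card, H.card - T.length ≤ i → x i ∈ T) := by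
  have hlen : (P ++ M ++ T).length = H.card := by rw [← Multiset.coe_card, hH]; rfl
  have hnd : (P ++ M ++ T).Nodup := by rw [← Multiset.coe_nodup, hH]; exact H.nodup
  refine ⟨fun i => (P ++ M ++ T)[i.1], h.isPathPower hnd hlen, ?_, fun i hi => ?_, fun i hi => ?_⟩
  · ext v
    rw [mem_image, ← Finset.mem_val, ← hH, Multiset.mem_coe, List.mem_iff_getElem]
    simp only [mem_univ, true_and]
    exact ⟨fun ⟨i, hi⟩ => ⟨i, by omega, hi⟩, fun ⟨i, hi, hv⟩ => ⟨⟨i, by omega⟩, hv⟩⟩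
  · simp only [List.append_assoc, List.getElem_append_left hi]
    exact List.getElem_mem hi
  · simp only [List.length_append] at hlen
    show (P ++ M ++ T)[i.1] ∈ T
    rw [List.getElem_append_right (by simp; omega)]
    exact List.getElem_mem _

theorem IsTransitiveOn.mono {S T : Finset V} (h : IsTransitiveOn E T) (hST : S ⊆ T) :
    IsTransitiveOn E S :=
  let ⟨f, hf, hE⟩ := h
  ⟨f, hf.mono (coe_subset.2 hST), fun u hu v hv => hE u (hST hu) v (hST hv)⟩

theorem IsTransitiveOn.exists_list_pairwise (hT : IsTournament E) {S : Finset V}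
    (h : IsTransitiveOn E S) : ∃ l : List V, (l : Multiset V) = S.val ∧ l.Pairwise E := by
  obtain ⟨f, -, hE⟩ := h
  have hperm := List.mergeSort_perm S.toList fun u v => decide (f u ≤ f v)
  have hsorted := List.pairwise_mergeSort (le := fun u v => decide (f u ≤ f v))
    (by simp only [decide_eq_true_eq]; omega)
    (by simp only [Bool.or_eq_true, decide_eq_true_eq]; omega) S.toList
  refine ⟨_, by rw [Multiset.coe_eq_coe.2 hperm, coe_toList], ?_⟩
  refine (hsorted.and (hperm.nodup_iff.2 S.nodup_toList)).imp_of_mem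
    fun {u v} hu hv ⟨hle, hne⟩ => (hT.2 u v hne).2 fun hvu => ?_
  have := hE v (mem_toList.1 (hperm.subset hv)) u (mem_toList.1 (hperm.subset hu)) hvu
  simp only [decide_eq_true_eq] at hle
  omega

theorem exists_disjoint_pairwise_lists (hT : IsTournament E) {X Y : Finset V}
    (hX : 2 * k ≤ X.card) (hY : k ≤ Y.card) (hXt : IsTransitiveOn E X)
    (hYt : IsTransitiveOn E Y) :
    ∃ P T : List V, P.Pairwise E ∧ T.Pairwise E ∧ P.length = k ∧ T.length = k ∧
      (P ++ T).Nodup ∧ (∀ v ∈ P, v ∈ Y) ∧ ∀ v ∈ T, v ∈ X := by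
  obtain ⟨P', hP'Y, hP'⟩ := exists_subset_card_eq hY
  obtain ⟨T', hT'X, hT'⟩ := exists_subset_card_eq (s := X \ P') (n := k)
    (by have := le_card_sdiff P' X; omega)
  obtain ⟨P, hPP', hPpw⟩ := (hYt.mono hP'Y).exists_list_pairwise hT
  obtain ⟨T, hTT', hTpw⟩ := (hXt.mono (hT'X.trans sdiff_subset)).exists_list_pairwise hT
  have hPsub : ∀ v ∈ P, v ∈ P' := fun v hv => by rwa [← Multiset.mem_coe, hPP', mem_val] at hv
  have hTsub : ∀ v ∈ T, v ∈ X \ P' := fun v hv =>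
    hT'X (by rwa [← Multiset.mem_coe, hTT', mem_val] at hv)
  refine ⟨P, T, hPpw, hTpw, by rw [← Multiset.coe_card, hPP', card_val, hP'],
    by rw [← Multiset.coe_card, hTT', card_val, hT'], List.nodup_append.2 ⟨?_, ?_, ?_⟩,
    fun v hv => hP'Y (hPsub v hv), fun v hv => (mem_sdiff.1 (hTsub v hv)).1⟩
  · rw [← Multiset.coe_nodup, hPP']; exact P'.nodup
  · rw [← Multiset.coe_nodup, hTT']; exact T'.nodup
  · exact fun a ha b hb hab => (mem_sdiff.1 (hTsub b hb)).2 (hab ▸ hPsub a ha)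

/-- An absorber with `r = R + m + 1` whose transitive blocks `S i` are listed in transitive order
and whose absorbing part is listed as `q 1, …, q R`; as multiset identities, `val_H` and `val_Q`
say that these lists have no repetitions and together partition `H`. -/
structure AbsorberLayout (E : V → V → Prop) (k : ℕ) (H Q : Finset V) where
  R : ℕ
  m : ℕ
  S : ℕ → List V
  q : ℕ → V
  one_le_R : 1 ≤ R
  length_S : ∀ i ≤ R + m + 1, (S i).length = 2 * k
  pairwise_S : ∀ i ≤ R + m + 1, (S i).Pairwise E
  val_H : H.val = ((List.range (R + m + 2)).map fun i => (S i : Multiset V)).sum + Q.val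
  val_Q : Q.val = ((List.range' 1 R).map q : List V)
  S_succ : ∀ i ≤ R + m, ∀ a ∈ S i, ∀ b ∈ S (i + 1), E a b
  S_last_zero : ∀ a ∈ S (R + m + 1), ∀ b ∈ S 0, E a b
  S_zero_Q : ∀ a ∈ S 0, ∀ b ∈ Q, E a b
  Q_S : ∀ a ∈ Q, ∀ b ∈ S (R + 1), E a b
  S_q : ∀ j ∈ List.range' 1 R, ∀ a ∈ S j, E a (q j)
  q_S : ∀ j ∈ List.range' 1 R, ∀ b ∈ S (j + 1), E (q j) b

theorem IsAbsorber.nonempty_layout (hT : IsTournament E) {H Q : Finset V}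
    (hH : IsAbsorber E k H Q) : Nonempty (AbsorberLayout E k H Q) := by
  obtain ⟨r, S, q, hr, hdisj, hSQ, rfl, rfl, hinj, hS, hsucc, hlast, hS0Q, hQS, hq⟩ := hH
  obtain ⟨m, rfl⟩ : ∃ m, r = 2 ^ (10 * k) + m + 1 := ⟨r - 2 ^ (10 * k) - 1, by omega⟩
  have hex : ∀ i, ∃ l : List V, i ≤ 2 ^ (10 * k) + m + 1 →
      (l : Multiset V) = (S i).val ∧ l.Pairwise E := fun i => by
    by_cases hi : i ≤ 2 ^ (10 * k) + m + 1
    · obtain ⟨l, hl⟩ := (hS i hi).2.exists_list_pairwise hT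
      exact ⟨l, fun _ => hl⟩
    · exact ⟨[], fun h => absurd h hi⟩
  choose l hl using hex
  have hmem : ∀ i ≤ 2 ^ (10 * k) + m + 1, ∀ a, a ∈ l i ↔ a ∈ S i := fun i hi a => by
    rw [← Multiset.mem_coe, (hl i hi).1, Finset.mem_val]
  refine ⟨⟨2 ^ (10 * k), m, l, q, Nat.one_le_two_pow, fun i hi => ?_, fun i hi => (hl i hi).2,
    ?_, ?_, ?_, ?_, ?_, ?_, ?_, ?_⟩⟩
  · rw [← Multiset.coe_card, (hl i hi).1, card_val, (hS i hi).1]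
  · rw [val_biUnion_range_union (fun i hi j hj => hdisj i j (by omega) (by omega))
      (fun i hi => hSQ i (by omega))]
    congr 2
    exact List.map_congr_left fun i hi => ((hl i (by simp at hi; omega)).1).symm
  · rw [image_val_of_injOn (by rwa [coe_Icc])]
    rfl
  · intro i hi a ha b hb
    exact hsucc i (by omega) a ((hmem i (by omega) a).1 ha) b ((hmem _ (by omega) b).1 hb)
  · intro a ha b hb
    exact hlast a ((hmem _ le_rfl a).1 ha) b ((hmem 0 (Nat.zero_le _) b).1 hb)
  · intro a ha b hb
    exact hS0Q a ((hmem 0 (Nat.zero_le _) a).1 ha) b hb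
  · intro a ha b hb
    exact hQS a ha b ((hmem _ (by omega) b).1 hb)
  · intro j hj a ha
    rw [List.mem_range'_1] at hj
    exact (hq j hj.1 (by omega)).1 a ((hmem j (by omega) a).1 ha) _ (mem_singleton_self _)
  · intro j hj b hb
    rw [List.mem_range'_1] at hj
    exact (hq j hj.1 (by omega)).2 _ (mem_singleton_self _) b ((hmem _ (by omega) b).1 hb)

namespace AbsorberLayout

variable {H Q : Finset V} (F : AbsorberLayout E k H Q)

def lap : List ℕ := List.range' (F.R + 1) (F.m + 1) ++ [0]

noncomputable def fullBlock (U : List V) (j : ℕ) : List V :=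
  F.S j ++ if F.q j ∈ U then [] else [F.q j]

noncomputable def innerBlocks (U : List V) : List (List V) :=
  F.lap.map (fun i => (F.S i).take k) ++ (List.range' 1 F.R).map (F.fullBlock U) ++
    F.lap.map (fun i => (F.S i).drop k)

theorem le_of_mem_lap {i : ℕ} (hi : i ∈ F.lap) : i ≤ F.R + F.m + 1 := by
  simp only [lap, List.mem_append, List.mem_range'_1, List.mem_singleton] at hi
  omega

theorem head?_lap : F.lap.head? = some (F.R + 1) := by simp [lap, List.range'_succ]

theorem getLast?_lap : F.lap.getLast? = some 0 := by simp [lap]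

theorem isChain_lap : F.lap.IsChain fun i j => ∀ a ∈ F.S i, ∀ b ∈ F.S j, E a b := by
  refine List.isChain_append.2
    ⟨(List.isChain_range' _ _ 1).imp_of_mem_imp fun i j _ hj hij => ?_, .singleton 0, ?_⟩
  · rw [hij, List.mem_range'_1] at hj
    exact hij ▸ F.S_succ i (by omega)
  · simp only [List.getLast?_range', Nat.add_one_ne_zero, if_false, List.head?_cons,
      Option.mem_def, Option.some.injEq, forall_eq']
    rw [Nat.add_right_comm, Nat.add_sub_cancel]
    exact F.S_last_zero

theorem mem_fullBlock {U : List V} {j : ℕ} {a : V} (ha : a ∈ F.fullBlock U j) :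
    a ∈ F.S j ∨ a = F.q j := by
  unfold fullBlock at ha
  split_ifs at ha <;> simp_all

theorem fullBlock_rel {U : List V} {j : ℕ} (hj : j ∈ List.range' 1 F.R) :
    ∀ a ∈ F.fullBlock U j, ∀ b ∈ F.S (j + 1), E a b := by
  intro a ha b hb
  rcases F.mem_fullBlock ha with ha | rfl
  · exact F.S_succ j (by rw [List.mem_range'_1] at hj; omega) a ha b hb
  · exact F.q_S j hj b hb

theorem take_fullBlock_subset {U : List V} {j : ℕ} (hj : j ≤ F.R + F.m + 1) :
    (F.fullBlock U j).take k ⊆ F.S j := by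
  rw [fullBlock, List.take_append_of_le_length (by rw [F.length_S j hj]; omega)]
  exact List.take_subset _ _

theorem pairwise_of_mem_innerBlocks {U b : List V} (hb : b ∈ F.innerBlocks U) : b.Pairwise E := by
  simp only [innerBlocks, List.mem_append, List.mem_map] at hb
  rcases hb with (⟨i, hi, rfl⟩ | ⟨j, hj, rfl⟩) | ⟨i, hi, rfl⟩
  · exact (F.pairwise_S i (F.le_of_mem_lap hi)).sublist (List.take_sublist _ _)
  · refine List.pairwise_append.2 ⟨F.pairwise_S j (by rw [List.mem_range'_1] at hj; omega),
      by split_ifs <;> simp, fun a ha b hb => ?_⟩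
    split_ifs at hb
    · simp at hb
    · exact (List.mem_singleton.1 hb) ▸ F.S_q j hj a ha
  · exact (F.pairwise_S i (F.le_of_mem_lap hi)).sublist (List.drop_sublist _ _)

theorem le_length_of_mem_innerBlocks {U b : List V} (hb : b ∈ F.innerBlocks U) :
    k ≤ b.length := by
  simp only [innerBlocks, List.mem_append, List.mem_map] at hb
  rcases hb with (⟨i, hi, rfl⟩ | ⟨j, hj, rfl⟩) | ⟨i, hi, rfl⟩
  · simp only [List.length_take, F.length_S i (F.le_of_mem_lap hi)]
    omega
  · simp only [fullBlock, List.length_append,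
      F.length_S j (by rw [List.mem_range'_1] at hj; omega)]
    omega
  · simp only [List.length_drop, F.length_S i (F.le_of_mem_lap hi)]
    omega

theorem isChain_innerBlocks (U : List V) : (F.innerBlocks U).IsChain (BeatsPrefix E k) := by
  have hlo : (F.lap.map fun i => (F.S i).take k).IsChain (BeatsPrefix E k) :=
    (List.isChain_map _).2 <| F.isChain_lap.imp fun i j h a ha x hx =>
      h a (List.mem_of_mem_take ha) x (List.mem_of_mem_take (List.mem_of_mem_take hx))
  have hhi : (F.lap.map fun i => (F.S i).drop k).IsChain (BeatsPrefix E k) :=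
    (List.isChain_map _).2 <| F.isChain_lap.imp fun i j h a ha x hx =>
      h a (List.mem_of_mem_drop ha) x (List.mem_of_mem_drop (List.mem_of_mem_take hx))
  have hmid : ((List.range' 1 F.R).map (F.fullBlock U)).IsChain (BeatsPrefix E k) :=
    (List.isChain_map _).2 <| (List.isChain_range' 1 F.R 1).imp_of_mem_imp
      fun i j hi hj hij a ha x hx => by
        rw [List.mem_range'_1] at hj
        exact F.fullBlock_rel hi a ha x (hij ▸ F.take_fullBlock_subset (by omega) hx)
  obtain ⟨R', hR'⟩ : ∃ R', F.R = R' + 1 := ⟨F.R - 1, by have := F.one_le_R; omega⟩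
  have hhead : (List.range' 1 F.R).head? = some 1 := by simp [hR', List.range'_succ]
  have hlast : (List.range' 1 F.R).getLast? = some F.R := by simp [hR', List.getLast?_range']
  refine List.isChain_append.2 ⟨List.isChain_append.2 ⟨hlo, hmid, ?_⟩, hhi, ?_⟩
  all_goals simp only [List.getLast?_append, List.getLast?_map, List.head?_map, F.head?_lap,
    F.getLast?_lap, hhead, hlast, Option.map_some, Option.or_some, Option.mem_def,
    Option.some.injEq, forall_eq']
  · exact fun a ha x hx => F.S_succ 0 (Nat.zero_le _) a (List.mem_of_mem_take ha) x
      (F.take_fullBlock_subset (by omega) hx)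
  · exact fun a ha x hx => F.fullBlock_rel (List.mem_range'_1.2 (by omega)) a ha x
      (List.mem_of_mem_drop (List.mem_of_mem_take hx))

theorem head?_innerBlocks (U : List V) :
    (F.innerBlocks U).head? = some ((F.S (F.R + 1)).take k) := by
  simp [innerBlocks, F.head?_lap]

theorem getLast?_innerBlocks (U : List V) :
    (F.innerBlocks U).getLast? = some ((F.S 0).drop k) := by
  simp [innerBlocks, F.getLast?_lap]

theorem isChain_blocks {P T : List V} (hPTQ : ∀ v ∈ P ++ T, v ∈ Q) :
    (P :: (F.innerBlocks (P ++ T) ++ [T])).IsChain (BeatsPrefix E k) := by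
  refine List.isChain_cons.2 ⟨?_, List.isChain_append.2 ⟨F.isChain_innerBlocks _, .singleton T, ?_⟩⟩
  all_goals simp only [List.head?_append, F.head?_innerBlocks, F.getLast?_innerBlocks,
    Option.some_or, List.head?_cons, Option.mem_def, Option.some.injEq, forall_eq']
  · exact fun a ha x hx => F.Q_S a (hPTQ a (List.mem_append_left T ha)) x
      (List.mem_of_mem_take (List.mem_of_mem_take hx))
  · exact fun a ha x hx => F.S_zero_Q a (List.mem_of_mem_drop ha) x
      (hPTQ x (List.mem_append_right P (List.mem_of_mem_take hx)))

theorem isPathPowerList_blocks {P T : List V} (hP : P.Pairwise E) (hT : T.Pairwise E)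
    (hPk : k ≤ P.length) (hTk : k ≤ T.length) (hPTQ : ∀ v ∈ P ++ T, v ∈ Q) :
    IsPathPowerList E k (P ++ (F.innerBlocks (P ++ T)).flatten ++ T) := by
  have := isPathPowerList_flatten (Bs := P :: (F.innerBlocks (P ++ T) ++ [T])) ?_ ?_
    (F.isChain_blocks hPTQ)
  · simpa using this
  all_goals
    intro b hb
    simp only [List.mem_cons, List.mem_append, List.not_mem_nil, or_false] at hb
    rcases hb with rfl | hb | rfl
  · exact hP
  · exact F.pairwise_of_mem_innerBlocks hb
  · exact hT
  · exact hPk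
  · exact F.le_length_of_mem_innerBlocks hb
  · exact hTk

theorem perm_lap_append : (F.lap ++ List.range' 1 F.R).Perm (List.range (F.R + F.m + 2)) := by
  rw [List.perm_ext_iff_of_nodup _ List.nodup_range]
  · simp only [lap, List.mem_append, List.mem_range'_1, List.mem_singleton, List.mem_range]
    omega
  · simp only [lap, List.nodup_append, List.nodup_singleton, List.mem_range'_1,
      List.mem_singleton, List.mem_append]
    exact ⟨⟨List.nodup_range', trivial, by omega⟩, List.nodup_range', by omega⟩

theorem coe_flatten_blocks {P T : List V} (hPT : (P ++ T).Nodup) (hPTQ : ∀ v ∈ P ++ T, v ∈ Q) :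
    ((P ++ (F.innerBlocks (P ++ T)).flatten ++ T : List V) : Multiset V) = H.val := by
  set qs := (List.range' 1 F.R).map F.q
  have hqs : qs.Nodup := by rw [← Multiset.coe_nodup, ← F.val_Q]; exact Q.nodup
  have hreserved : ((P ++ T : List V) : Multiset V) = ↑(qs.filter (· ∈ P ++ T)) := by
    refine Multiset.coe_eq_coe.2 ((List.perm_ext_iff_of_nodup hPT (hqs.filter _)).2 fun v => ?_)
    have := hPTQ v
    rw [← Finset.mem_val, F.val_Q, Multiset.mem_coe] at this
    simp only [List.mem_filter, decide_eq_true_eq]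
    tauto
  have hQ : ((P ++ T : List V) : Multiset V) + ↑(qs.filter (· ∉ P ++ T)) = Q.val := by
    rw [hreserved, F.val_Q, Multiset.coe_add]
    exact Multiset.coe_eq_coe.2 (by simpa using List.filter_append_perm (· ∈ P ++ T) qs)
  have hhalves : (F.lap.map fun i => ((F.S i).take k : Multiset V)).sum +
      (F.lap.map fun i => ((F.S i).drop k : Multiset V)).sum =
      (F.lap.map fun i => (F.S i : Multiset V)).sum := by
    simp only [← List.sum_map_add, Multiset.coe_add, List.take_append_drop]
  have hfull : ((List.range' 1 F.R).map fun j => (F.fullBlock (P ++ T) j : Multiset V)).sum =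
      ((List.range' 1 F.R).map fun j => (F.S j : Multiset V)).sum + ↑(qs.filter (· ∉ P ++ T)) := by
    simp only [fullBlock, ← Multiset.coe_add, List.sum_map_add]
    rw [← List.flatten_map_ite_singleton, Multiset.coe_flatten, List.map_map]
    rfl
  have hidx := (F.perm_lap_append.map fun i => (F.S i : Multiset V)).sum_eq
  rw [List.map_append, List.sum_append] at hidx
  rw [F.val_H, ← hidx, ← hQ, ← hhalves]
  simp only [innerBlocks, ← Multiset.coe_add, Multiset.coe_flatten, List.map_append,
    List.sum_append, List.map_map, Function.comp_def, hfull]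
  abel

end AbsorberLayout

end

/-- a `k`-absorber contains the `k`-th power of a Hamilton path whose
first `k` vertices lie in `Y` and last `k` vertices lie in `X`, for any transitive
`2k`-sets `X, Y` inside the absorbing part. -/
theorem statement_14 (V : Type) (E : V → V → Prop) (hT : IsTournament E)
    (k : ℕ) (H Q : Finset V) (hH : IsAbsorber E k H Q)
    (X Y : Finset V) (hXsub : X ⊆ Q) (hYsub : Y ⊆ Q)
    (hXcard : X.card = 2 * k) (hYcard : Y.card = 2 * k)
    (hXtrans : IsTransitiveOn E X) (hYtrans : IsTransitiveOn E Y) :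
    ∃ x : Fin H.card → V, IsPathPower E k H.card x ∧
      Finset.univ.image x = H ∧
      (∀ i : Fin H.card, (i : ℕ) < k → x i ∈ Y) ∧
      (∀ i : Fin H.card, H.card - k ≤ (i : ℕ) → x i ∈ X) := by
  obtain ⟨F⟩ := hH.nonempty_layout hT
  obtain ⟨P, T, hPpw, hTpw, hPk, hTk, hPT, hPY, hTX⟩ :=
    exists_disjoint_pairwise_lists hT hXcard.ge (by omega) hXtrans hYtrans
  have hPTQ : ∀ v ∈ P ++ T, v ∈ Q := fun v hv =>
    (List.mem_append.1 hv).elim (fun hv => hYsub (hPY v hv)) fun hv => hXsub (hTX v hv)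
  obtain ⟨x, hx, himage, hfirst, hlast⟩ :=
    (F.isPathPowerList_blocks hPpw hTpw hPk.ge hTk.ge hPTQ).exists_isPathPower
      (F.coe_flatten_blocks hPT hPTQ)
  exact ⟨x, hx, himage, fun i hi => hPY _ (hfirst i (hPk ▸ hi)),
    fun i hi => hTX _ (hlast i (hTk ▸ hi))⟩
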